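/- arXiv:1911.05401 — 3 statements merged into one kernel-verified Lean document; each statement's English description precedes it below -/
import Mathlib

section
/- For any differentiable path 𝐳: [0,1] → ℝ^n with derivative 𝐯(t) = d𝐳/dt, 𝐳(0) = 𝐱 and 𝐳(1) = 𝐲, the integral ∫₀¹ ‖𝐯(t)‖_tr dt is at least d_tr(𝐱, 𝐲), where d_tr(𝐱, 𝐲) = max{ max_{1≤i<j≤n} |(𝐱_i−𝐲_i)−(𝐱_j−𝐲_j)|, max_{1≤i≤n} |𝐱_i−𝐲_i| }. -/
/-! Each term of `d_tr` is `|φ (y - x)|` for a linear functional `φ` (a coordinate or a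
difference of two coordinates) with `|φ w| ≤ ‖w‖_tr`. By the fundamental theorem of calculus
`φ (y - x) = ∫ φ (v t)`, so it is at most `∫ |φ (v t)| ≤ ∫ ‖v t‖_tr`. -/

noncomputable def tropNorm {n : ℕ} (a : Fin n → ℝ) : ℝ :=
  Finset.fold max 0 a Finset.univ - Finset.fold min 0 a Finset.univ

theorem abs_map_sub_le_integral_of_hasDerivAt {E : Type*} [NormedAddCommGroup E]
    [NormedSpace ℝ E] {z v : ℝ → E} {a b : ℝ} (hab : a ≤ b)
    (hderiv : ∀ t ∈ Set.Icc a b, HasDerivAt z (v t) t) (hv : ContinuousOn v (Set.Icc a b))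
    {N : E → ℝ} (hN : Continuous N) (φ : E →L[ℝ] ℝ) (hφN : ∀ w, |φ w| ≤ N w) :
    |φ (z b - z a)| ≤ ∫ t in a..b, N (v t) := by
  rw [← Set.uIcc_of_le hab] at hderiv hv
  have hφv : IntervalIntegrable (fun t => φ (v t)) MeasureTheory.volume a b :=
    (φ.continuous.comp_continuousOn hv).intervalIntegrable
  have hNv : IntervalIntegrable (fun t => N (v t)) MeasureTheory.volume a b :=
    (hN.comp_continuousOn hv).intervalIntegrable
  have hftc : φ (z b - z a) = ∫ t in a..b, φ (v t) := by
    rw [map_sub, intervalIntegral.integral_eq_sub_of_hasDerivAt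
      (fun t ht => φ.hasFDerivAt.comp_hasDerivAt t (hderiv t ht)) hφv]
    rfl
  calc |φ (z b - z a)| ≤ ∫ t in a..b, |φ (v t)| := by
        rw [hftc]; exact intervalIntegral.abs_integral_le_integral_abs hab
    _ ≤ ∫ t in a..b, N (v t) :=
        intervalIntegral.integral_mono_on hab hφv.abs hNv fun t _ => hφN (v t)

theorem continuous_finset_fold_max {ι α : Type*} [LinearOrder α] [TopologicalSpace α]
    [OrderClosedTopology α] (b : α) (s : Finset ι) :
    Continuous fun a : ι → α => s.fold max b a := by
  classical
  induction s using Finset.induction_on with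
  | empty => exact continuous_const
  | insert i s hi ih =>
    simp only [Finset.fold_insert hi]
    exact (continuous_apply i).max ih

theorem continuous_finset_fold_min {ι α : Type*} [LinearOrder α] [TopologicalSpace α]
    [OrderClosedTopology α] (b : α) (s : Finset ι) :
    Continuous fun a : ι → α => s.fold min b a := by
  classical
  induction s using Finset.induction_on with
  | empty => exact continuous_const
  | insert i s hi ih =>
    simp only [Finset.fold_insert hi]
    exact (continuous_apply i).min ih

namespace TropNorm

variable {n : ℕ}

theorem continuous : Continuous (tropNorm (n := n)) :=
  (continuous_finset_fold_max 0 _).sub (continuous_finset_fold_min 0 _)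

/-- `tropNorm a` is the diameter of `{0, a 0, …, a (n-1)}`. -/
theorem sub_le {a : Fin n → ℝ} {c d : ℝ} (hc : c ∈ insert 0 (Set.range a))
    (hd : d ∈ insert 0 (Set.range a)) : c - d ≤ tropNorm a := by
  have hle_max : c ≤ Finset.univ.fold max 0 a := by
    rcases hc with rfl | ⟨i, rfl⟩
    exacts [Finset.le_fold_max _ |>.2 (Or.inl le_rfl),
      Finset.le_fold_max _ |>.2 (Or.inr ⟨i, Finset.mem_univ i, le_rfl⟩)]
  have hmin_le : Finset.univ.fold min 0 a ≤ d := by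
    rcases hd with rfl | ⟨i, rfl⟩
    exacts [Finset.fold_min_le _ |>.2 (Or.inl le_rfl),
      Finset.fold_min_le _ |>.2 (Or.inr ⟨i, Finset.mem_univ i, le_rfl⟩)]
  rw [tropNorm]
  linarith

theorem nonneg (a : Fin n → ℝ) : 0 ≤ tropNorm a := by
  simpa using sub_le (Set.mem_insert 0 (Set.range a)) (Set.mem_insert 0 _)

theorem abs_apply_sub_apply_le (a : Fin n → ℝ) (i j : Fin n) :
    |a i - a j| ≤ tropNorm a :=
  abs_sub_le_iff.2 ⟨sub_le (.inr ⟨i, rfl⟩) (.inr ⟨j, rfl⟩), sub_le (.inr ⟨j, rfl⟩) (.inr ⟨i, rfl⟩)⟩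

theorem abs_apply_le (a : Fin n → ℝ) (i : Fin n) : |a i| ≤ tropNorm a := by
  simpa using abs_sub_le_iff.2 ⟨sub_le (.inr ⟨i, rfl⟩) (Set.mem_insert 0 (Set.range a)),
    sub_le (Set.mem_insert 0 (Set.range a)) (.inr ⟨i, rfl⟩)⟩

end TropNorm

theorem tropical_length_ge_dtr {n : ℕ} (x y : Fin n → ℝ)
    (z v : ℝ → Fin n → ℝ)
    (hderiv : ∀ t ∈ Set.Icc (0:ℝ) 1, HasDerivAt z (v t) t)
    (hv : ContinuousOn v (Set.Icc (0:ℝ) 1))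
    (h0 : z 0 = x) (h1 : z 1 = y) :
    sSup { r : ℝ |
        (∃ i j : Fin n, i < j ∧ r = |(x i - y i) - (x j - y j)|) ∨
        (∃ i : Fin n, r = |x i - y i|) }
      ≤ ∫ t in (0:ℝ)..1, tropNorm (v t) := by
  have hbound := abs_map_sub_le_integral_of_hasDerivAt zero_le_one hderiv hv TropNorm.continuous
  rw [h0, h1] at hbound
  refine Real.sSup_le ?_
    (intervalIntegral.integral_nonneg zero_le_one fun t _ => TropNorm.nonneg _)
  rintro r (⟨i, j, -, rfl⟩ | ⟨i, rfl⟩)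
  · have hij := hbound (.proj j - .proj i) fun w => by
      simpa using TropNorm.abs_apply_sub_apply_le w j i
    convert hij using 2
    simp only [sub_apply, ContinuousLinearMap.proj_apply, Pi.sub_apply]
    ring
  · have hi := hbound (.proj i) (TropNorm.abs_apply_le · i)
    simpa [abs_sub_comm] using hi
end

section
/- For p > 1 and any C¹ path 𝐳: [0,1] → ℝ^n from 𝐱 to 𝐲 with velocity 𝐯, (∫₀¹ ‖𝐯(t)‖_tr^p dt)^{1/p} ≥ d_tr(𝐱, 𝐲), with equality achieved by the straight-line path; hence the infimum of (∫₀¹ ‖𝐯(t)‖_tr^p dt)^{1/p} over such paths is d_tr(𝐱, 𝐲). -/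
/-!
`tropNorm` is convex, being `a ↦ M a + M (-a)` with `M a = max (0, maxᵢ aᵢ)` a maximum of
linear forms, and nonnegative, so `tropNorm ^ p` is convex for `p ≥ 1`. Since
`z 1 - z 0 = ∫₀¹ z'`, Jensen's inequality on the probability space `[0,1]` gives
`tropNorm (y - x) ^ p ≤ ∫₀¹ tropNorm (z') ^ p`. The straight line has constant velocity `y - x`,
so it attains the bound.
-/

open Finset MeasureTheory Set

section FoldMax

variable {ι : Type*} (s : Finset ι)

lemma Finset.fold_max_zero_nonneg (a : ι → ℝ) : 0 ≤ s.fold max 0 a :=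
  (le_fold_max _).2 (Or.inl le_rfl)

lemma Finset.fold_min_zero_eq_neg_fold_max_neg (a : ι → ℝ) :
    s.fold min 0 a = -s.fold max 0 (-a) := by
  have h := fold_hom (s := s) (b := 0) (f := -a) (op := max) (m := Neg.neg)
    fun x y => (min_neg_neg x y).symm
  simp only [neg_zero, Pi.neg_apply, neg_neg] at h
  exact h

lemma convexOn_fold_max_zero : ConvexOn ℝ univ fun a : ι → ℝ => s.fold max 0 a := by
  refine ⟨convex_univ, fun a _ b _ μ ν hμ hν _ => (fold_max_le _).2 ⟨?_, fun i hi => ?_⟩⟩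
  · exact add_nonneg (smul_nonneg hμ (s.fold_max_zero_nonneg a))
      (smul_nonneg hν (s.fold_max_zero_nonneg b))
  have ha : a i ≤ s.fold max 0 a := (le_fold_max _).2 (Or.inr ⟨i, hi, le_rfl⟩)
  have hb : b i ≤ s.fold max 0 b := (le_fold_max _).2 (Or.inr ⟨i, hi, le_rfl⟩)
  simp only [Pi.add_apply, Pi.smul_apply, smul_eq_mul]
  gcongr

end FoldMax

section TropNorm

variable {n : ℕ}

lemma tropNorm_eq_fold_max_add_fold_max_neg (a : Fin n → ℝ) :
    tropNorm a = univ.fold max 0 a + univ.fold max 0 (-a) := by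
  rw [tropNorm, fold_min_zero_eq_neg_fold_max_neg, sub_neg_eq_add]

lemma tropNorm_nonneg (a : Fin n → ℝ) : 0 ≤ tropNorm a := by
  rw [tropNorm_eq_fold_max_add_fold_max_neg]
  exact add_nonneg (fold_max_zero_nonneg _ _) (fold_max_zero_nonneg _ _)

lemma tropNorm_neg (a : Fin n → ℝ) : tropNorm (-a) = tropNorm a := by
  rw [tropNorm_eq_fold_max_add_fold_max_neg, tropNorm_eq_fold_max_add_fold_max_neg, neg_neg,
    add_comm]

lemma convexOn_tropNorm : ConvexOn ℝ univ (tropNorm : (Fin n → ℝ) → ℝ) := by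
  rw [show (tropNorm : (Fin n → ℝ) → ℝ) = _ from funext tropNorm_eq_fold_max_add_fold_max_neg]
  exact (convexOn_fold_max_zero univ).add
    ((convexOn_fold_max_zero univ).comp_linearMap (-LinearMap.id))

end TropNorm

lemma ConvexOn.rpow {E : Type*} [AddCommMonoid E] [Module ℝ E] {s : Set E} {f : E → ℝ}
    (hf : ConvexOn ℝ s f) (hf₀ : ∀ x ∈ s, 0 ≤ f x) {p : ℝ} (hp : 1 ≤ p) :
    ConvexOn ℝ s fun x => f x ^ p := by
  refine ⟨hf.1, fun x hx y hy a b ha hb hab => ?_⟩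
  calc f (a • x + b • y) ^ p ≤ (a • f x + b • f y) ^ p :=
        Real.rpow_le_rpow (hf₀ _ (hf.1 hx hy ha hb hab)) (hf.2 hx hy ha hb hab) (by linarith)
    _ ≤ a • f x ^ p + b • f y ^ p := (convexOn_rpow hp).2 (hf₀ x hx) (hf₀ y hy) ha hb hab

lemma ConvexOn.map_sub_le_integral_deriv {E : Type*} [NormedAddCommGroup E] [NormedSpace ℝ E]
    [FiniteDimensional ℝ E] {f : E → ℝ} (hf : ConvexOn ℝ univ f) {z : ℝ → E}
    (hz : ContDiff ℝ 1 z) : f (z 1 - z 0) ≤ ∫ t in (0:ℝ)..1, f (deriv z t) := by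
  have : IsProbabilityMeasure (volume.restrict (Ioc (0:ℝ) 1)) := ⟨by simp⟩
  have hfc : Continuous f := continuousOn_univ.1 (hf.continuousOn isOpen_univ)
  have hz' : Continuous (deriv z) := hz.continuous_deriv le_rfl
  have hFTC : ∫ t in (0:ℝ)..1, deriv z t = z 1 - z 0 :=
    intervalIntegral.integral_deriv_eq_sub (fun t _ => hz.differentiable one_ne_zero t)
      (hz'.intervalIntegrable 0 1)
  rw [← hFTC, intervalIntegral.integral_of_le zero_le_one,
    intervalIntegral.integral_of_le zero_le_one]
  exact hf.map_integral_le hfc.continuousOn isClosed_univ (by simp) hz'.integrableOn_Ioc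
    (hfc.comp hz').integrableOn_Ioc

section PLength

variable {n : ℕ}

noncomputable def tropPLength (p : ℝ) (z : ℝ → Fin n → ℝ) : ℝ :=
  (∫ t in (0:ℝ)..1, tropNorm (deriv z t) ^ p) ^ (1 / p)

lemma tropNorm_sub_le_tropPLength {p : ℝ} (hp : 1 ≤ p) {x y : Fin n → ℝ} {z : ℝ → Fin n → ℝ}
    (hz : ContDiff ℝ 1 z) (h0 : z 0 = x) (h1 : z 1 = y) : tropNorm (x - y) ≤ tropPLength p z := by
  have hJensen :=
    (convexOn_tropNorm.rpow (fun a _ => tropNorm_nonneg a) hp).map_sub_le_integral_deriv hz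
  rw [h0, h1, ← tropNorm_neg, neg_sub] at hJensen
  rw [tropPLength, one_div, Real.le_rpow_inv_iff_of_pos (tropNorm_nonneg _) _ (by linarith)]
  · exact hJensen
  · exact intervalIntegral.integral_nonneg zero_le_one fun t _ =>
      Real.rpow_nonneg (tropNorm_nonneg _) p

lemma tropPLength_lineMap {p : ℝ} (hp : p ≠ 0) (x y : Fin n → ℝ) :
    tropPLength p (AffineMap.lineMap x y) = tropNorm (x - y) := by
  have hderiv (t : ℝ) : deriv (AffineMap.lineMap x y) t = y - x :=
    AffineMap.hasDerivAt_lineMap.deriv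
  simp only [tropPLength, hderiv, intervalIntegral.integral_const, sub_zero, one_smul]
  rw [← neg_sub, tropNorm_neg, one_div, Real.rpow_rpow_inv (tropNorm_nonneg _) hp]

end PLength

theorem tropical_p_length {n : ℕ} (p : ℝ) (hp : 1 < p) (x y : Fin n → ℝ) :
    (∀ z : ℝ → Fin n → ℝ, ContDiff ℝ 1 z → z 0 = x → z 1 = y →
        tropNorm (x - y)
          ≤ (∫ t in (0:ℝ)..1, tropNorm (deriv z t) ^ p) ^ (1 / p)) ∧
    sInf { r : ℝ | ∃ z : ℝ → Fin n → ℝ, ContDiff ℝ 1 z ∧ z 0 = x ∧ z 1 = y ∧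
        r = (∫ t in (0:ℝ)..1, tropNorm (deriv z t) ^ p) ^ (1 / p) }
      = tropNorm (x - y) := by
  have lower_bound (z : ℝ → Fin n → ℝ) (hz : ContDiff ℝ 1 z) (h0 : z 0 = x) (h1 : z 1 = y) :
      tropNorm (x - y) ≤ tropPLength p z :=
    tropNorm_sub_le_tropPLength hp.le hz h0 h1
  refine ⟨lower_bound, IsLeast.csInf_eq ⟨?_, ?_⟩⟩
  · exact ⟨AffineMap.lineMap x y, AffineMap.contDiff_lineMap x y, AffineMap.lineMap_apply_zero x y,
      AffineMap.lineMap_apply_one x y, (tropPLength_lineMap (by linarith) x y).symm⟩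
  · rintro r ⟨z, hz, h0, h1, rfl⟩
    exact lower_bound z hz h0 h1
end

section
/- For each 𝐚, 𝐛 ∈ ℝ^n, ∑_{i=1}^n b_i a_i ≤ ζ(𝐛) · ‖𝐚‖_tr, where ζ(𝐛) = max_{S⊆{1,…,n}} |∑_{i∈S} b_i| and ‖𝐚‖_tr is the tropical norm. -/
noncomputable def zeta {n : ℕ} (b : Fin n → ℝ) : ℝ :=
  Finset.univ.powerset.sup' ⟨∅, Finset.empty_mem_powerset _⟩
    (fun S => |∑ i ∈ S, b i|)

/-! Write `‖a‖_tr = M - m` with `m ≤ 0 ≤ M` and `m ≤ a i ≤ M`, and split the sum by the sign of `b i`: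
on the nonnegative part `b i * a i ≤ b i * M`, on the negative part `b i * a i ≤ b i * m`, and
both partial sums of `b` are at most `ζ(b)` in absolute value. Hence the sum is at most
`ζ(b) * M + ζ(b) * (-m) = ζ(b) * ‖a‖_tr`. -/

open Finset

lemma abs_sum_le_zeta {n : ℕ} (b : Fin n → ℝ) (S : Finset (Fin n)) : |∑ i ∈ S, b i| ≤ zeta b :=
  le_sup' (fun S => |∑ i ∈ S, b i|) (mem_powerset.2 (subset_univ S))

lemma sum_mul_le_of_abs_sum_subset_le {ι : Type*} (s : Finset ι) {a b : ι → ℝ} {m M Z : ℝ}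
    (hm : ∀ i ∈ s, m ≤ a i) (hM : ∀ i ∈ s, a i ≤ M) (hm0 : m ≤ 0) (hM0 : 0 ≤ M)
    (hZ : ∀ t ⊆ s, |∑ i ∈ t, b i| ≤ Z) :
    ∑ i ∈ s, b i * a i ≤ Z * (M - m) := by
  set P := s.filter (fun i => 0 ≤ b i)
  set N := s.filter (fun i => ¬ 0 ≤ b i)
  have hP : ∑ i ∈ P, b i * a i ≤ (∑ i ∈ P, b i) * M := by
    rw [sum_mul]
    refine sum_le_sum fun i hi => ?_
    obtain ⟨his, hbi⟩ := mem_filter.1 hi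
    exact mul_le_mul_of_nonneg_left (hM i his) hbi
  have hN : ∑ i ∈ N, b i * a i ≤ (∑ i ∈ N, b i) * m := by
    rw [sum_mul]
    refine sum_le_sum fun i hi => ?_
    obtain ⟨his, hbi⟩ := mem_filter.1 hi
    exact mul_le_mul_of_nonpos_left (hm i his) (le_of_not_ge hbi)
  have hPZ : ∑ i ∈ P, b i ≤ Z := (le_abs_self _).trans (hZ P (filter_subset _ _))
  have hNZ : -∑ i ∈ N, b i ≤ Z := (neg_le_abs _).trans (hZ N (filter_subset _ _))
  calc ∑ i ∈ s, b i * a i = ∑ i ∈ P, b i * a i + ∑ i ∈ N, b i * a i :=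
        (sum_filter_add_sum_filter_not _ _ _).symm
    _ ≤ (∑ i ∈ P, b i) * M + (-∑ i ∈ N, b i) * (-m) := by linarith
    _ ≤ Z * M + Z * (-m) := by gcongr; linarith
    _ = Z * (M - m) := by ring

theorem inner_le_zeta_mul_tropNorm {n : ℕ} (a b : Fin n → ℝ) :
    ∑ i, b i * a i ≤ zeta b * tropNorm a :=
  sum_mul_le_of_abs_sum_subset_le univ
    (fun i hi => (fold_min_le _).2 (Or.inr ⟨i, hi, le_rfl⟩))
    (fun i hi => (le_fold_max _).2 (Or.inr ⟨i, hi, le_rfl⟩))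
    ((fold_min_le _).2 (Or.inl le_rfl)) ((le_fold_max _).2 (Or.inl le_rfl))
    (fun t _ => abs_sum_le_zeta b t)
end
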